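/- arXiv:1312.6378 — 2 statements merged into one kernel-verified Lean document; each statement's English description precedes it below -/
import Mathlib

section
/- Let p be an odd prime. The only word w of length at most 2p+1 in the alphabet {μ, ε, ρ^k, φ^k} satisfying the admissibility rules and having total degree 4p^k for some k ≥ 0 is w = ρ^k ε μ. -/
/-!
STATEMENT 6: For an odd prime `p`, the only admissible word `w` of length at
most `2p+1` with total degree `4p^k` for some `k ≥ 0` is `w = ρ^k ε μ`.
-/

/-- Words in the alphabet `{μ, ε, ρ^k, φ^k}`, read right-to-left as
constructor applications. -/
inductive BWord : Type
  | mu : BWord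
  | e : BWord → BWord
  | rho : ℕ → BWord → BWord
  | phi : ℕ → BWord → BWord

namespace BWord

/-- Admissibility: the rightmost letter is `μ`; anything directly left of `μ`
is `ε`; left of an `ε` must be a `ρ^k`; left of a `ρ^k` or a `φ^k` must be an
`ε` or a `φ^j`. -/
def Adm : BWord → Prop
  | mu => True
  | e w => Adm w ∧ (w = mu ∨ (∃ i w', w = rho i w') ∨ (∃ i w', w = phi i w'))
  | rho _ w => Adm w ∧ ∃ w', w = e w'
  | phi _ w => Adm w ∧ ((∃ i w', w = rho i w') ∨ (∃ i w', w = phi i w'))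

/-- The length (number of letters) of a word. -/
def len : BWord → ℕ
  | mu => 1
  | e w => len w + 1
  | rho _ w => len w + 1
  | phi _ w => len w + 1

/-- Total degree: `|μ| = 2`, `|εw| = 1 + |w|`, `|ρ^i w| = p^i (1 + |w|)`,
`|φ^ℓ w| = p^ℓ (2 + p|w|)`. -/
def deg (p : ℕ) : BWord → ℕ
  | mu => 2
  | e w => 1 + deg p w
  | rho i w => p ^ i * (1 + deg p w)
  | phi l w => p ^ l * (2 + p * deg p w)

end BWord

/-!
Prepending `ε` or `ρ^0` to a word adds one to both its degree and its length, so we carry a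
count `m` of such prepended letters. Since `|ρ^(i+1) w| = p |ρ^i w|`, `|φ^(l+1) w| = p |φ^l w|`
and `|φ^0 w| = 2 + p |w|`, every other letter leads to an equation `n + p X = 4 p^k` with
`n = m` or `n = m + 2` and `X ≥ 2`. As `p ≥ 3` this forces `k ≥ 1` and `n = j p`, and dividing
by `p` leaves a padding by `j` letters of degree `4 p^(k-1)`. The descent ends at
`m + |μ| = 4 p^k` with `m ≤ 2p`, which forces `k = 0`.
-/

theorem exists_eq_mul_of_add_mul_eq_mul_pow {p m X c k : ℕ} (hp : 0 < p) (hc : c < p * X)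
    (h : m + p * X = c * p ^ k) : ∃ j k', m = j * p ∧ k = k' + 1 ∧ j + X = c * p ^ k' := by
  obtain ⟨k', rfl⟩ : ∃ k', k = k' + 1 := by
    refine Nat.exists_eq_succ_of_ne_zero fun hk => ?_
    rw [hk, pow_zero, mul_one] at h
    omega
  have hdvd : p ∣ m + p * X := h ▸ Dvd.dvd.mul_left (dvd_pow_self p k'.succ_ne_zero) c
  obtain ⟨j, rfl⟩ := (Nat.dvd_add_left (dvd_mul_right p X)).mp hdvd
  refine ⟨j, k', mul_comm p j, rfl, Nat.eq_of_mul_eq_mul_left hp ?_⟩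
  rw [mul_add, h, pow_succ]
  ring

namespace BWord

variable {p : ℕ}

theorem deg_rho_succ (i : ℕ) (w : BWord) : deg p (rho (i + 1) w) = p * deg p (rho i w) := by
  simp only [deg, pow_succ]
  ring

theorem deg_phi_succ (l : ℕ) (w : BWord) : deg p (phi (l + 1) w) = p * deg p (phi l w) := by
  simp only [deg, pow_succ]
  ring

theorem two_le_deg (hp : 1 ≤ p) (w : BWord) : 2 ≤ deg p w := by
  induction w with
  | mu => simp [deg]
  | e w ih => simp only [deg]; omega
  | rho i w ih => exact le_mul_of_one_le_of_le (Nat.one_le_pow _ _ hp) (by omega)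
  | phi l w ih => exact le_mul_of_one_le_of_le (Nat.one_le_pow _ _ hp) (by omega)

theorem four_lt_mul_deg (hp : 3 ≤ p) (w : BWord) : 4 < p * deg p w :=
  lt_of_lt_of_le (by norm_num) (Nat.mul_le_mul hp (two_le_deg (by omega) w))

/-- `m` counts letters `ε` or `ρ^0` prepended to `w`. -/
def PaddingRigid (p : ℕ) (w : BWord) : Prop :=
  ∀ m k, m + len w ≤ 2 * p + 1 → m + deg p w = 4 * p ^ k →
    (m = 0 ∧ w = rho k (e mu)) ∨ (k = 0 ∧ m = 1 ∧ w = e mu) ∨ (k = 0 ∧ m = 2 ∧ w = mu)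

theorem paddingRigid_mu (hp : 2 ≤ p) : PaddingRigid p mu := by
  intro m k hlen hdeg
  simp only [len, deg] at hlen hdeg
  rcases Nat.eq_zero_or_pos k with rfl | hk
  · exact Or.inr (Or.inr ⟨rfl, by simpa using hdeg, rfl⟩)
  · have := le_self_pow (by omega : 1 ≤ p) hk.ne'
    omega

theorem paddingRigid_e {w : BWord} (hw : Adm (e w)) (ih : PaddingRigid p w) :
    PaddingRigid p (e w) := by
  intro m k hlen hdeg
  simp only [len, deg] at hlen hdeg
  rcases ih (m + 1) k (by omega) (by omega) with ⟨hm, -⟩ | ⟨-, -, rfl⟩ | ⟨hk, hm, rfl⟩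
  · omega
  · simp [Adm] at hw
  · exact Or.inr (Or.inl ⟨hk, by omega, rfl⟩)

theorem paddingRigid_rho (hp : 3 ≤ p) {i : ℕ} {w : BWord} (hw : Adm (rho i w))
    (ih : PaddingRigid p w) : PaddingRigid p (rho i w) := by
  obtain ⟨-, w, rfl⟩ := hw
  induction i with
  | zero =>
    intro m k hlen hdeg
    simp only [len, deg, pow_zero, one_mul] at hlen hdeg
    rcases ih (m + 1) k (by simp only [len]; omega) (by simp only [deg]; omega) with
      ⟨hm, -⟩ | ⟨rfl, hm, hw⟩ | ⟨-, -, hw⟩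
    · omega
    · exact Or.inl ⟨by omega, by rw [hw]⟩
    · cases hw
  | succ i ihi =>
    intro m k hlen hdeg
    rw [deg_rho_succ] at hdeg
    obtain ⟨j, k', rfl, rfl, hj⟩ :=
      exists_eq_mul_of_add_mul_eq_mul_pow (by omega) (four_lt_mul_deg hp _) hdeg
    have hjm : j ≤ j * p := Nat.le_mul_of_pos_right j (by omega)
    rcases ihi j k' (by simp only [len] at hlen ⊢; omega) hj with
      ⟨rfl, hw⟩ | ⟨-, -, hw⟩ | ⟨-, -, hw⟩
    · simp only [rho.injEq, e.injEq] at hw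
      obtain ⟨rfl, rfl⟩ := hw
      exact Or.inl ⟨zero_mul p, rfl⟩
    · cases hw
    · cases hw

theorem add_deg_phi_ne (hp : 3 ≤ p) {l : ℕ} {w : BWord} (hw : Adm (phi l w))
    (ih : PaddingRigid p w) {m k : ℕ} (hlen : m + len (phi l w) ≤ 2 * p + 1) :
    m + deg p (phi l w) ≠ 4 * p ^ k := by
  obtain ⟨-, hshape⟩ := hw
  induction l generalizing m k with
  | zero =>
    intro hdeg
    simp only [len, deg, pow_zero, one_mul] at hlen hdeg
    obtain ⟨j, k', hj, rfl, hjk⟩ :=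
      exists_eq_mul_of_add_mul_eq_mul_pow (m := m + 2) (k := k) (by omega) (four_lt_mul_deg hp w)
        (by omega)
    have hj3 : j * 3 ≤ j * p := Nat.mul_le_mul_left j hp
    rcases ih j k' (by omega) hjk with ⟨rfl, -⟩ | ⟨-, -, rfl⟩ | ⟨-, -, rfl⟩
    · omega
    · simp at hshape
    · simp at hshape
  | succ l ihl =>
    intro hdeg
    rw [deg_phi_succ] at hdeg
    obtain ⟨j, k', rfl, rfl, hjk⟩ :=
      exists_eq_mul_of_add_mul_eq_mul_pow (by omega) (four_lt_mul_deg hp _) hdeg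
    have hjm : j ≤ j * p := Nat.le_mul_of_pos_right j (by omega)
    exact ihl (by simp only [len] at hlen ⊢; omega) hjk

theorem paddingRigid_of_adm (hp : 3 ≤ p) {w : BWord} (hw : Adm w) : PaddingRigid p w := by
  induction w with
  | mu => exact paddingRigid_mu (by omega)
  | e w ih => exact paddingRigid_e hw (ih hw.1)
  | rho i w ih => exact paddingRigid_rho hp hw (ih hw.1)
  | phi l w ih => exact fun m k hlen hdeg => absurd hdeg (add_deg_phi_ne hp hw (ih hw.1) hlen)

end BWord

theorem stmt6 (p : ℕ) (hp : p.Prime) (hodd : Odd p) :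
    ∀ (w : BWord) (k : ℕ), BWord.Adm w → BWord.len w ≤ 2 * p + 1 →
      BWord.deg p w = 4 * p ^ k → w = BWord.rho k (BWord.e BWord.mu) := by
  intro w k hw hlen hdeg
  have hp3 : 3 ≤ p := by
    obtain ⟨c, rfl⟩ := hodd
    have := hp.two_le
    omega
  rcases BWord.paddingRigid_of_adm hp3 hw 0 k (by omega) (by omega) with
    ⟨-, h⟩ | ⟨-, h, -⟩ | ⟨-, h, -⟩
  · exact h
  · omega
  · omega
end

section
/- Let p be a prime and ℓ ≥ 1. Inside A ⊗ A where A = F_p[x]/x^{p^ℓ}, the element x' = x⊗1 − 1⊗x satisfies (x')^{p^ℓ} = 0, and the subalgebra C'' generated over F_p by x' is isomorphic to F_p[x']/(x')^{p^ℓ} ≅ A; moreover A⊗A ≅ (A⊗1) ⊗ C'' as augmented commutative F_p-algebras. -/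
/-!
In characteristic `p` the `p^ℓ`-th power map is additive, so
`(x ⊗ 1 - 1 ⊗ x)^{p^ℓ} = x^{p^ℓ} ⊗ 1 - 1 ⊗ x^{p^ℓ} = 0` and `x ↦ x'` defines `ψ : A → A ⊗ A`.
The multiplication map `Φ : a ⊗ b ↦ (a ⊗ 1) ψ(b)` fixes `x ⊗ 1` and sends `1 ⊗ x` to
`x ⊗ 1 - 1 ⊗ x`, so `Φ ∘ Φ` fixes both generators and `Φ` is an involution. With `ε` the
augmentation, `id ⊗ ε` sends `x'` back to `x`, so `ψ` is injective; and `ε ⊗ ε` kills both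
`x ⊗ 1` and `x'`, so `Φ` preserves the augmentation.
-/

open Polynomial TensorProduct Algebra.TensorProduct

section Shear

variable {R A : Type*} [CommRing R] [CommRing A] [Algebra R A] {x : A}

theorem productMap_includeLeft_comp_self (hx : Algebra.adjoin R {x} = ⊤)
    {ψ : A →ₐ[R] A ⊗[R] A} (hψ : ψ x = x ⊗ₜ 1 - 1 ⊗ₜ x) :
    (productMap includeLeft ψ).comp (productMap includeLeft ψ) = AlgHom.id R (A ⊗[R] A) := by
  apply Algebra.TensorProduct.ext <;> refine AlgHom.ext_of_adjoin_eq_top hx ?_ <;>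
    simp [hψ, ← Algebra.TensorProduct.one_def]

theorem bijective_productMap_includeLeft (hx : Algebra.adjoin R {x} = ⊤)
    {ψ : A →ₐ[R] A ⊗[R] A} (hψ : ψ x = x ⊗ₜ 1 - 1 ⊗ₜ x) :
    Function.Bijective (productMap includeLeft ψ) :=
  Function.Involutive.bijective (AlgHom.congr_fun (productMap_includeLeft_comp_self hx hψ))

theorem injective_of_augmentation_eq_zero (hx : Algebra.adjoin R {x} = ⊤)
    {ψ : A →ₐ[R] A ⊗[R] A} (hψ : ψ x = x ⊗ₜ 1 - 1 ⊗ₜ x) {ε : A →ₐ[R] R} (hε : ε x = 0) :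
    Function.Injective ψ := by
  let π : A ⊗[R] A →ₐ[R] A := lift (AlgHom.id R A) ((Algebra.ofId R A).comp ε)
    fun _ _ ↦ Commute.all _ _
  have hπψ : π.comp ψ = AlgHom.id R A :=
    AlgHom.ext_of_adjoin_eq_top hx (by simp [π, hψ, hε])
  exact Function.LeftInverse.injective (AlgHom.congr_fun hπψ)

theorem lift_comp_productMap_includeLeft (hx : Algebra.adjoin R {x} = ⊤)
    {ψ : A →ₐ[R] A ⊗[R] A} (hψ : ψ x = x ⊗ₜ 1 - 1 ⊗ₜ x) {ε : A →ₐ[R] R} (hε : ε x = 0) :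
    (lift ε ε fun _ _ ↦ Commute.all _ _).comp (productMap includeLeft ψ) =
      lift ε ε fun _ _ ↦ Commute.all _ _ := by
  apply Algebra.TensorProduct.ext <;> refine AlgHom.ext_of_adjoin_eq_top hx ?_ <;>
    simp [hψ, hε]

end Shear

theorem tmul_one_sub_one_tmul_pow_eq_zero {F A B : Type*} [Field F] {p k : ℕ} [Fact p.Prime]
    [CharP F p] [CommRing A] [Algebra F A] [CommRing B] [Algebra F B] {a : A} {b : B}
    (ha : a ^ p ^ k = 0) (hb : b ^ p ^ k = 0) : (a ⊗ₜ[F] 1 - 1 ⊗ₜ[F] b) ^ p ^ k = 0 := by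
  cases subsingleton_or_nontrivial (A ⊗[F] B)
  · exact Subsingleton.elim _ _
  have := charP_of_injective_algebraMap' F (A := A ⊗[F] B) p
  rw [sub_pow_char_pow, tmul_pow, tmul_pow, ha, hb, one_pow, zero_tmul, tmul_zero, sub_zero]

-- `R[X] ⧸ Ideal.span {f}` is `AdjoinRoot f` by definition, whose API is used here.
section Truncated

variable {R : Type*} [CommRing R] {n : ℕ}

theorem adjoin_mk_X_eq_top :
    Algebra.adjoin R {Ideal.Quotient.mk (Ideal.span {(X : R[X]) ^ n}) X} = ⊤ :=
  AdjoinRoot.adjoinRoot_eq_top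

theorem mk_X_pow_eq_zero : Ideal.Quotient.mk (Ideal.span {(X : R[X]) ^ n}) X ^ n = 0 := by
  rw [← map_pow, Ideal.Quotient.eq_zero_iff_mem]
  exact Ideal.mem_span_singleton_self _

theorem exists_algHom_mk_X_eq {B : Type*} [CommRing B] [Algebra R B] {b : B} (hb : b ^ n = 0) :
    ∃ f : R[X] ⧸ Ideal.span {(X : R[X]) ^ n} →ₐ[R] B,
      f (Ideal.Quotient.mk _ X) = b :=
  ⟨AdjoinRoot.liftAlgHom _ (Algebra.ofId R B) b (by simp [hb]), AdjoinRoot.liftAlgHom_root ..⟩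

theorem aeval_zero_eq_zero_of_mem_span_X_pow (hn : n ≠ 0) {a : R[X]}
    (ha : a ∈ Ideal.span {(X : R[X]) ^ n}) : aeval (0 : R) a = 0 := by
  obtain ⟨b, rfl⟩ := Ideal.mem_span_singleton'.mp ha
  simp [zero_pow hn]

end Truncated

theorem stmt9 (p ℓ : ℕ) [Fact p.Prime] :
    letI F := ZMod p
    letI A := Polynomial F ⧸ Ideal.span {(X : Polynomial F) ^ (p ^ ℓ)}
    letI xbar : A := Ideal.Quotient.mk _ (X : Polynomial F)
    letI x' : A ⊗[F] A := xbar ⊗ₜ[F] 1 - 1 ⊗ₜ[F] xbar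
    letI aug : A →ₐ[F] F := Ideal.Quotient.liftₐ _ (aeval (0 : F)) (by
      intro a ha
      rw [Ideal.mem_span_singleton] at ha
      obtain ⟨b, rfl⟩ := ha
      simp [zero_pow (pow_ne_zero ℓ (Fact.out (p := p.Prime)).ne_zero)])
    letI augT : A ⊗[F] A →ₐ[F] F :=
      Algebra.TensorProduct.lift aug aug (fun _ _ => Commute.all _ _)
    -- `(x')^{p^ℓ} = 0`
    x' ^ (p ^ ℓ) = 0 ∧
    -- `C'' = F_p[x'] ≅ F_p[x]/(x')^{p^ℓ} ≅ A`
    (∃ ψ : A →ₐ[F] A ⊗[F] A, ψ xbar = x' ∧ Function.Injective ψ) ∧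
    -- `A ⊗ A ≅ (A⊗1) ⊗ C''` via multiplication, compatibly with augmentations
    (∃ Φ : A ⊗[F] A →ₐ[F] A ⊗[F] A,
      (∀ a : A, Φ (a ⊗ₜ[F] 1) = a ⊗ₜ[F] 1) ∧
      Φ (1 ⊗ₜ[F] xbar) = x' ∧
      Function.Bijective Φ ∧
      augT.comp Φ = augT) := by
  have hx := adjoin_mk_X_eq_top (R := ZMod p) (n := p ^ ℓ)
  have hxbar := mk_X_pow_eq_zero (R := ZMod p) (n := p ^ ℓ)
  have hx' := tmul_one_sub_one_tmul_pow_eq_zero (F := ZMod p) hxbar hxbar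
  obtain ⟨ψ, hψ⟩ := exists_algHom_mk_X_eq (R := ZMod p) hx'
  let ε := Ideal.Quotient.liftₐ (Ideal.span {(X : (ZMod p)[X]) ^ p ^ ℓ}) (aeval (0 : ZMod p))
    fun _ ↦ aeval_zero_eq_zero_of_mem_span_X_pow (pow_ne_zero ℓ (Fact.out : p.Prime).ne_zero)
  have hε : ε (Ideal.Quotient.mk _ X) = 0 := by simp [ε, Ideal.Quotient.liftₐ_apply]
  refine ⟨hx', ⟨ψ, hψ, injective_of_augmentation_eq_zero hx hψ hε⟩,
    ⟨productMap includeLeft ψ, productMap_left_apply _ _, (productMap_right_apply _ _ _).trans hψ,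
      ?_, ?_⟩⟩
  · exact bijective_productMap_includeLeft hx hψ
  · exact lift_comp_productMap_includeLeft hx hψ hε
end
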